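/- In the differential expression D(x) = 2(3f''(x)² - 4f'(x)f⁽³⁾(x) + f(x)f⁽⁴⁾(x) + f(x)²f⁽⁵⁾(0)) with f(x) = x·exp(Σ_{k≥2} a_{2k}x^{2k}), the coefficient of x^j in D(x) is a polynomial in the a's in which a_{j+2} appears linearly with coefficient 2(j-4)(j+1)(j+2)(j+3); in particular this coefficient is nonzero for all j > 4. -/

import Mathlib

/-!
STATEMENT 5: In `D(x) = 2(3f''² - 4f'f⁽³⁾ + f·f⁽⁴⁾ + f²·f⁽⁵⁾(0))` with
`f(x) = x·exp(∑_{k≥2} a_{2k}x^{2k})` (the `a`'s generic, i.e. over an arbitrary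
commutative ℚ-algebra), the coefficient of `x^j` depends on `a_{j+2}` linearly with
coefficient `2(j-4)(j+1)(j+2)(j+3)`; in particular this is nonzero for all `j > 4`.
The exponential is encoded by its defining ODE.
-/

/-- `k`-th formal derivative of a power series. -/
noncomputable def Dn {R : Type*} [CommRing R] (k : ℕ) (f : PowerSeries R) : PowerSeries R :=
  (PowerSeries.derivativeFun (R := R))^[k] f

/-- The differential expression `D = 2(3f''² - 4f'f⁽³⁾ + f·f⁽⁴⁾ + f²·f⁽⁵⁾(0))`. -/
noncomputable def Dexpr {R : Type*} [CommRing R] (f : PowerSeries R) : PowerSeries R :=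
  2 * (3 * (Dn 2 f) ^ 2 - 4 * Dn 1 f * Dn 3 f + f * Dn 4 f
    + PowerSeries.C (120 * PowerSeries.coeff 5 f) * f ^ 2)

private lemma cancel_nat {A : Type*} [CommRing A] [Algebra ℚ A] (n : ℕ) {x y : A}
    (h : x * ((n : A) + 1) = y * ((n : A) + 1)) : x = y := by
  have hn : ((n : A) + 1) = algebraMap ℚ A ((n : ℚ) + 1) := by push_cast; simp
  have hne : ((n : ℚ) + 1) ≠ 0 := by positivity
  have h2 : x * ((n : A) + 1) * algebraMap ℚ A (((n : ℚ) + 1)⁻¹)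
      = y * ((n : A) + 1) * algebraMap ℚ A (((n : ℚ) + 1)⁻¹) := by rw [h]
  rwa [hn, mul_assoc, mul_assoc, ← map_mul, mul_inv_cancel₀ hne, map_one, mul_one, mul_one] at h2

private lemma coeff_derivativeFun' {A : Type*} [CommRing A] (f : PowerSeries A) (n : ℕ) :
    PowerSeries.coeff n (PowerSeries.derivativeFun f) = PowerSeries.coeff (n + 1) f * (n + 1) :=
  PowerSeries.coeff_derivative f n

private lemma coeff_Dn' {A : Type*} [CommRing A] (k n : ℕ) (f : PowerSeries A) :
    PowerSeries.coeff n (Dn k f)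
      = ((n + k).descFactorial k : A) * PowerSeries.coeff (n + k) f := by
  induction k generalizing n with
  | zero => simp [Dn]
  | succ k ih =>
    have hD : Dn (k + 1) f = PowerSeries.derivativeFun (Dn k f) := by
      rw [Dn, Function.iterate_succ_apply']; rfl
    rw [hD, coeff_derivativeFun', ih (n + 1)]
    rw [show (n + (k + 1)).descFactorial (k + 1) = (n + 1) * ((n + 1 + k).descFactorial k) by
      rw [show n + (k + 1) = n + 1 + k from by ring, Nat.descFactorial_succ, Nat.add_sub_cancel]]
    push_cast
    ring

private lemma coeff_mul_Dn {A : Type*} [CommRing A] (i l n : ℕ) (f : PowerSeries A) :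
    PowerSeries.coeff n (Dn i f * Dn l f) =
      ∑ p ∈ Finset.range (n + 1),
        (((p + i).descFactorial i * ((n - p + l).descFactorial l) : ℕ) : A) *
          (PowerSeries.coeff (p + i) f * PowerSeries.coeff (n - p + l) f) := by
  rw [PowerSeries.coeff_mul, Finset.Nat.sum_antidiagonal_eq_sum_range_succ_mk]
  refine Finset.sum_congr rfl fun p hp => ?_
  rw [coeff_Dn', coeff_Dn']
  push_cast
  ring

private lemma coeff_Dexpr {A : Type*} [CommRing A] (n : ℕ) (f : PowerSeries A) :
    PowerSeries.coeff n (Dexpr f) =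
      2 * (3 * PowerSeries.coeff n (Dn 2 f * Dn 2 f)
        - 4 * PowerSeries.coeff n (Dn 1 f * Dn 3 f)
        + PowerSeries.coeff n (Dn 0 f * Dn 4 f)
        + (120 * PowerSeries.coeff 5 f) * PowerSeries.coeff n (Dn 0 f * Dn 0 f)) := by
  have h0 : Dn 0 f = f := rfl
  have h2 : (2 : PowerSeries A) = PowerSeries.C 2 := (map_ofNat (PowerSeries.C (R := A)) 2).symm
  have h3 : (3 : PowerSeries A) = PowerSeries.C 3 := (map_ofNat (PowerSeries.C (R := A)) 3).symm
  have h4 : (4 : PowerSeries A) = PowerSeries.C 4 := (map_ofNat (PowerSeries.C (R := A)) 4).symm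
  rw [Dexpr, h0, sq, sq, h2, h3, h4]
  simp only [PowerSeries.coeff_C_mul, map_add, map_sub, mul_assoc, PowerSeries.coeff_C_mul]

private lemma rec_formula {A : Type*} [CommRing A] (a : ℕ → A) (E : PowerSeries A)
    (hE : PowerSeries.derivativeFun E = PowerSeries.derivativeFun
      (PowerSeries.mk fun n => if 4 ≤ n ∧ Even n then a n else 0) * E) (n : ℕ) :
    PowerSeries.coeff (n + 1) E * ((n : A) + 1) =
      ∑ k ∈ Finset.range (n + 1),
        (if 4 ≤ k + 1 ∧ Even (k + 1) then a (k + 1) else 0) * ((k : A) + 1)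
          * PowerSeries.coeff (n - k) E := by
  have h := congrArg (PowerSeries.coeff n) hE
  rw [coeff_derivativeFun'] at h
  rw [h, PowerSeries.coeff_mul, Finset.Nat.sum_antidiagonal_eq_sum_range_succ_mk]
  refine Finset.sum_congr rfl fun k hk => ?_
  rw [coeff_derivativeFun', PowerSeries.coeff_mk]

theorem stmt5 (A : Type*) [CommRing A] [Algebra ℚ A]
    (j : ℕ) (hj : 4 ≤ j) (hje : Even j)
    (a a' : ℕ → A) (f E f' E' : PowerSeries A)
    -- `f = X·exp(∑_{k≥2} a_{2k} X^{2k})`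
    (hE0 : PowerSeries.constantCoeff E = 1)
    (hE : PowerSeries.derivativeFun E =
      PowerSeries.derivativeFun
        (PowerSeries.mk fun n => if 4 ≤ n ∧ Even n then a n else 0) * E)
    (hf : f = PowerSeries.X * E)
    -- `f' = X·exp(∑_{k≥2} a'_{2k} X^{2k})`
    (hE0' : PowerSeries.constantCoeff E' = 1)
    (hE' : PowerSeries.derivativeFun E' =
      PowerSeries.derivativeFun
        (PowerSeries.mk fun n => if 4 ≤ n ∧ Even n then a' n else 0) * E')
    (hf' : f' = PowerSeries.X * E')
    -- the two coefficient sequences agree except possibly at index `j+2`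
    (hagree : ∀ i, i ≠ j + 2 → a i = a' i) :
    PowerSeries.coeff j (Dexpr f) - PowerSeries.coeff j (Dexpr f')
        = (2 * ((j : ℤ) - 4) * ((j : ℤ) + 1) * ((j : ℤ) + 2) * ((j : ℤ) + 3))
            • (a (j + 2) - a' (j + 2))
      ∧ ∀ m : ℕ, 4 < m →
          (2 * ((m : ℤ) - 4) * ((m : ℤ) + 1) * ((m : ℤ) + 2) * ((m : ℤ) + 3)) ≠ 0 := by
  constructor
  · -- coefficients of E agree up to j+1
    have key : ∀ n, n ≤ j + 1 → PowerSeries.coeff n E = PowerSeries.coeff n E' := by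
      intro n
      induction n using Nat.strong_induction_on with
      | _ n ih =>
        intro hn
        rcases n with _ | m
        · simp only [PowerSeries.coeff_zero_eq_constantCoeff]
          rw [hE0, hE0']
        · refine cancel_nat m ?_
          rw [rec_formula a E hE m, rec_formula a' E' hE' m]
          refine Finset.sum_congr rfl fun k hk => ?_
          have hk' : k ≤ m := by
            have := Finset.mem_range.mp hk; omega
          rw [hagree (k + 1) (by omega), ih (m - k) (by omega) (by omega)]
    -- e_1 = 0
    have e1 : PowerSeries.coeff 1 E = 0 := by
      have h := rec_formula a E hE 0
      simpa using h
    have e1' : PowerSeries.coeff 1 E' = 0 := by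
      have h := rec_formula a' E' hE' 0
      simpa using h
    -- difference at j+2
    have hd2 : PowerSeries.coeff (j + 2) E - PowerSeries.coeff (j + 2) E'
        = a (j + 2) - a' (j + 2) := by
      refine cancel_nat (j + 1) ?_
      rw [sub_mul, sub_mul]
      rw [show j + 2 = (j + 1) + 1 from rfl, rec_formula a E hE (j + 1),
        rec_formula a' E' hE' (j + 1), ← Finset.sum_sub_distrib]
      rw [Finset.sum_eq_single_of_mem (j + 1) (Finset.mem_range.mpr (by omega))]
      · have hev : Even (j + 1 + 1) := by
          obtain ⟨t, ht⟩ := hje; exact ⟨t + 1, by omega⟩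
        rw [if_pos ⟨by omega, hev⟩, if_pos ⟨by omega, hev⟩, Nat.sub_self,
          PowerSeries.coeff_zero_eq_constantCoeff, hE0, hE0',
          show j + 1 + 1 = j + 2 from rfl]
        ring
      · intro k hk hkne
        have hk' : k ≤ j := by
          have := Finset.mem_range.mp hk; omega
        rw [hagree (k + 1) (by omega), key (j + 1 - k) (by omega)]
        ring
    -- equality at j+3
    have hd3 : PowerSeries.coeff (j + 3) E = PowerSeries.coeff (j + 3) E' := by
      refine cancel_nat (j + 2) ?_
      rw [show j + 3 = (j + 2) + 1 from rfl, rec_formula a E hE (j + 2),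
        rec_formula a' E' hE' (j + 2)]
      refine Finset.sum_congr rfl fun k hk => ?_
      have hk' : k ≤ j + 2 := by
        have := Finset.mem_range.mp hk; omega
      rcases Nat.eq_zero_or_pos k with h0 | h0
      · subst h0
        rw [if_neg (by omega : ¬(4 ≤ 0 + 1 ∧ Even (0 + 1))),
          if_neg (by omega : ¬(4 ≤ 0 + 1 ∧ Even (0 + 1)))]
        ring
      rcases Nat.lt_or_ge k (j + 1) with h | h
      · -- 1 ≤ k ≤ j
        rw [hagree (k + 1) (by omega), key (j + 2 - k) (by omega)]
      · rcases Nat.eq_or_lt_of_le h with h1 | h1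
        · -- k = j+1 : coeff 1 factor vanishes
          rw [← h1, show j + 2 - (j + 1) = 1 from by omega, e1, e1', mul_zero, mul_zero]
        · -- k = j+2 : odd index, `if` is false
          have hk2 : k = j + 2 := by omega
          subst hk2
          have hodd : ¬ Even (j + 2 + 1) := by
            obtain ⟨t, ht⟩ := hje
            rintro ⟨u, hu⟩; omega
          rw [if_neg (fun h => hodd h.2), if_neg (fun h => hodd h.2)]
          ring
    -- translate to coefficients of f
    have hcf : ∀ n, n ≤ j + 4 → n ≠ j + 3 →
        PowerSeries.coeff n f = PowerSeries.coeff n f' := by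
      rintro (_ | m) hn hne
      · rw [hf, hf']
        simp
      · rw [hf, hf', PowerSeries.coeff_succ_X_mul, PowerSeries.coeff_succ_X_mul]
        rcases Nat.lt_or_ge m (j + 2) with h | h
        · exact key m (by omega)
        · have hm3 : m = j + 3 := by omega
          subst hm3
          exact hd3
    have hdf : PowerSeries.coeff (j + 3) f - PowerSeries.coeff (j + 3) f'
        = a (j + 2) - a' (j + 2) := by
      rw [hf, hf', show j + 3 = (j + 2) + 1 from rfl, PowerSeries.coeff_succ_X_mul,
        PowerSeries.coeff_succ_X_mul]
      exact hd2
    have hf1 : PowerSeries.coeff 1 f = 1 := by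
      rw [hf, show (1 : ℕ) = 0 + 1 from rfl, PowerSeries.coeff_succ_X_mul]
      simpa [PowerSeries.coeff_zero_eq_constantCoeff] using hE0
    have hf1' : PowerSeries.coeff 1 f' = 1 := by
      rw [hf', show (1 : ℕ) = 0 + 1 from rfl, PowerSeries.coeff_succ_X_mul]
      simpa [PowerSeries.coeff_zero_eq_constantCoeff] using hE0'
    -- the four product terms
    have hc5 : PowerSeries.coeff 5 f = PowerSeries.coeff 5 f' :=
      hcf 5 (by omega) (by omega)
    have T22 : PowerSeries.coeff j (Dn 2 f * Dn 2 f)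
        = PowerSeries.coeff j (Dn 2 f' * Dn 2 f') := by
      rw [coeff_mul_Dn, coeff_mul_Dn]
      refine Finset.sum_congr rfl fun p hp => ?_
      have hp' : p ≤ j := by have := Finset.mem_range.mp hp; omega
      rw [hcf (p + 2) (by omega) (by omega), hcf (j - p + 2) (by omega) (by omega)]
    have Tff : PowerSeries.coeff j (Dn 0 f * Dn 0 f)
        = PowerSeries.coeff j (Dn 0 f' * Dn 0 f') := by
      rw [coeff_mul_Dn, coeff_mul_Dn]
      refine Finset.sum_congr rfl fun p hp => ?_
      have hp' : p ≤ j := by have := Finset.mem_range.mp hp; omega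
      rw [hcf (p + 0) (by omega) (by omega), hcf (j - p + 0) (by omega) (by omega)]
    have T13 : PowerSeries.coeff j (Dn 1 f * Dn 3 f)
        - PowerSeries.coeff j (Dn 1 f' * Dn 3 f')
        = ((j + 3).descFactorial 3 : A) * (a (j + 2) - a' (j + 2)) := by
      rw [coeff_mul_Dn, coeff_mul_Dn, ← Finset.sum_sub_distrib]
      rw [Finset.sum_eq_single_of_mem 0 (Finset.mem_range.mpr (by omega))]
      · simp only [Nat.zero_add, Nat.sub_zero]
        rw [hf1, hf1', ← hdf]
        simp only [show Nat.descFactorial 1 1 = 1 from rfl, one_mul]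
        ring
      · intro p hp hpne
        have hp' : p ≤ j := by have := Finset.mem_range.mp hp; omega
        rw [hcf (p + 1) (by omega) (by omega), hcf (j - p + 3) (by omega) (by omega)]
        ring
    have T04 : PowerSeries.coeff j (Dn 0 f * Dn 4 f)
        - PowerSeries.coeff j (Dn 0 f' * Dn 4 f')
        = ((j + 3).descFactorial 4 : A) * (a (j + 2) - a' (j + 2)) := by
      rw [coeff_mul_Dn, coeff_mul_Dn, ← Finset.sum_sub_distrib]
      rw [Finset.sum_eq_single_of_mem 1 (Finset.mem_range.mpr (by omega))]
      · rw [show j - 1 + 4 = j + 3 from by omega, show (1 : ℕ) + 0 = 1 from rfl,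
          hf1, hf1', ← hdf]
        simp only [Nat.descFactorial_zero, one_mul]
        ring
      · intro p hp hpne
        have hp' : p ≤ j := by have := Finset.mem_range.mp hp; omega
        rw [hcf (p + 0) (by omega) (by omega), hcf (j - p + 4) (by omega) (by omega)]
        ring
    -- descFactorial values
    have hD3 : (((j + 3).descFactorial 3 : ℕ) : A) = ((j:A)+1) * ((j:A)+2) * ((j:A)+3) := by
      rw [show (j+3).descFactorial 3 = (j+1) * ((j+2) * ((j+3) * 1)) by
        rw [Nat.descFactorial_succ, Nat.descFactorial_succ, Nat.descFactorial_succ,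
          Nat.descFactorial_zero, show j+3-2 = j+1 from by omega,
          show j+3-1 = j+2 from by omega, Nat.sub_zero]]
      push_cast
      ring
    have hD4 : (((j + 3).descFactorial 4 : ℕ) : A)
        = (j:A) * (((j:A)+1) * ((j:A)+2) * ((j:A)+3)) := by
      rw [show (j+3).descFactorial 4 = j * ((j+3).descFactorial 3) by
        rw [Nat.descFactorial_succ, show j+3-3 = j from by omega]]
      rw [Nat.cast_mul, hD3]
    -- assemble
    rw [coeff_Dexpr, coeff_Dexpr, hc5, T22, Tff, zsmul_eq_mul]
    push_cast
    linear_combination (-8 : A) * T13 + (2:A) * T04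
      + (-8 * (a (j+2) - a' (j+2))) * hD3 + (2 * (a (j+2) - a' (j+2))) * hD4
  · intro m hm
    have h1 : (0:ℤ) < (m:ℤ) - 4 := by
      have : (4:ℤ) < (m:ℤ) := by exact_mod_cast hm
      omega
    have h2 : (0:ℤ) < (m:ℤ) + 1 := by positivity
    have h3 : (0:ℤ) < (m:ℤ) + 2 := by positivity
    have h4 : (0:ℤ) < (m:ℤ) + 3 := by positivity
    exact ne_of_gt (mul_pos (mul_pos (mul_pos (mul_pos (by norm_num) h1) h2) h3) h4)
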